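/- arXiv:2010.05110 — 4 statements merged into one kernel-verified Lean document; each statement's English description precedes it below -/
import Mathlib

section
/- For the classical ideal gas statistical manifold with metric g = Hess F and AC tensor C = −D³F where F(β,γ) = c β^{-3/2} e^{-γ}, the Yukawa term C_{ijk}C^{ijk} − C_i C^i vanishes identically (where C_i = C^j_{ij}, indices raised with g^{-1}). -/
/-!
Since `∂_γ F = -F`, every derivative of `F` has the form `e^{-γ} ψ(β)`, so the coordinate
derivatives commute on them and `C_{ijγ} = -∂_i∂_j∂_γ F = ∂_i∂_j F = g_{ij}`: the endomorphism
`C^i_{jγ}` is the identity. For a symmetric cubic form on a plane this alone forces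
`C_{ijk}C^{ijk} = C_i C^i`, whatever `C_{βββ}` is.
-/

open Real

section Yukawa

variable {R : Type*} [CommRing R]

noncomputable def traceVector (g : Matrix (Fin 2) (Fin 2) R) (C : Fin 2 → Fin 2 → Fin 2 → R)
    (i : Fin 2) : R :=
  ∑ j, ∑ l, g⁻¹ j l * C l i j

noncomputable def yukawaTerm (g : Matrix (Fin 2) (Fin 2) R) (C : Fin 2 → Fin 2 → Fin 2 → R) : R :=
  (∑ i, ∑ j, ∑ k, ∑ i', ∑ j', ∑ k', C i j k * g⁻¹ i i' * g⁻¹ j j' * g⁻¹ k k' * C i' j' k')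
    - ∑ i, ∑ j, g⁻¹ i j * traceVector g C i * traceVector g C j

/- Writing `g⁻¹ = Ring.inverse (det g) • adj g`, the identity is polynomial in the entries of `g`,
in `C 0 0 0` and in `Ring.inverse (det g)`, so it holds even when `g` is singular. -/
theorem yukawaTerm_eq_zero_of_slice_eq (g : Matrix (Fin 2) (Fin 2) R)
    (C : Fin 2 → Fin 2 → Fin 2 → R) (hC₁₂ : ∀ i j k, C i j k = C j i k)
    (hC₂₃ : ∀ i j k, C i j k = C i k j) (hCg : ∀ i j, C i j 1 = g i j) :
    yukawaTerm g C = 0 := by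
  have h001 := hCg 0 0
  have h011 := hCg 0 1
  have h101 := hCg 1 0
  have h111 := hCg 1 1
  have h010 : C 0 1 0 = g 0 0 := (hC₂₃ 0 1 0).trans h001
  have h100 : C 1 0 0 = g 0 0 := (hC₁₂ 1 0 0).trans h010
  have h110 : C 1 1 0 = g 1 0 := (hC₂₃ 1 1 0).trans h101
  have hg : g 1 0 = g 0 1 := by rw [← h101, ← h011, hC₁₂]
  simp only [yukawaTerm, traceVector, Matrix.inv_def, Matrix.adjugate_fin_two, Matrix.smul_apply,
    smul_eq_mul, Fin.sum_univ_two, Matrix.of_apply, Matrix.cons_val', Matrix.cons_val_zero,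
    Matrix.cons_val_one, Matrix.empty_val', Matrix.cons_val_fin_one,
    h001, h011, h101, h111, h010, h100, h110, hg]
  ring

end Yukawa

noncomputable def partialDeriv : Fin 2 → (ℝ → ℝ → ℝ) → ℝ → ℝ → ℝ :=
  ![fun f b g => deriv (fun b' => f b' g) b, fun f b g => deriv (fun g' => f b g') g]

theorem partialDeriv_neg (i : Fin 2) (f : ℝ → ℝ → ℝ) :
    partialDeriv i (-f) = -partialDeriv i f := by
  funext b g
  fin_cases i <;> exact deriv.neg

def IsExpNegMul (f : ℝ → ℝ → ℝ) : Prop :=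
  ∃ ψ : ℝ → ℝ, f = fun b g => exp (-g) * ψ b

namespace IsExpNegMul

variable {f : ℝ → ℝ → ℝ}

theorem partialDeriv_one (hf : IsExpNegMul f) : partialDeriv 1 f = -f := by
  obtain ⟨ψ, rfl⟩ := hf
  funext b g
  have h : HasDerivAt (fun g' => exp (-g') * ψ b) (exp (-g) * -1 * ψ b) g :=
    ((hasDerivAt_exp (-g)).comp g (hasDerivAt_neg g)).mul_const (ψ b)
  simp only [partialDeriv, Matrix.cons_val_one, Matrix.cons_val_zero, Pi.neg_apply, h.deriv]
  ring

theorem partialDeriv (hf : IsExpNegMul f) : ∀ i, IsExpNegMul (partialDeriv i f)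
  | 0 => by
    obtain ⟨ψ, rfl⟩ := hf
    exact ⟨deriv ψ, funext₂ fun b g => deriv_const_mul_field _⟩
  | 1 => by
    rw [hf.partialDeriv_one]
    obtain ⟨ψ, rfl⟩ := hf
    exact ⟨-ψ, funext₂ fun b g => by simp⟩

theorem partialDeriv_comm (hf : IsExpNegMul f) :
    ∀ i j, _root_.partialDeriv i (_root_.partialDeriv j f) =
      _root_.partialDeriv j (_root_.partialDeriv i f)
  | 0, 0 | 1, 1 => rfl
  | 0, 1 | 1, 0 => by
    simp only [hf.partialDeriv_one, (hf.partialDeriv 0).partialDeriv_one, partialDeriv_neg]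

end IsExpNegMul

theorem stmt_14_general (c : ℝ) (β γ : ℝ)
    (F : ℝ → ℝ → ℝ)
    (hF : ∀ b g, F b g = c * b ^ ((-3 : ℝ) / 2) * Real.exp (-g))
    (pd : Fin 2 → (ℝ → ℝ → ℝ) → (ℝ → ℝ → ℝ))
    (hpd0 : ∀ f b g, pd 0 f b g = deriv (fun b' => f b' g) b)
    (hpd1 : ∀ f b g, pd 1 f b g = deriv (fun g' => f b g') g)
    (gm : Matrix (Fin 2) (Fin 2) ℝ) (hgm : ∀ i j, gm i j = pd i (pd j F) β γ)
    (C : Fin 2 → Fin 2 → Fin 2 → ℝ)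
    (hC : ∀ i j k, C i j k = -(pd i (pd j (pd k F)) β γ))
    (Ci : Fin 2 → ℝ) (hCi : ∀ i, Ci i = ∑ j, ∑ l, gm⁻¹ j l * C l i j) :
    (∑ i, ∑ j, ∑ k, ∑ i', ∑ j', ∑ k',
        C i j k * gm⁻¹ i i' * gm⁻¹ j j' * gm⁻¹ k k' * C i' j' k')
      - (∑ i, ∑ j, gm⁻¹ i j * Ci i * Ci j) = 0 := by
  obtain rfl : pd = partialDeriv := by
    funext i f b g
    fin_cases i
    exacts [hpd0 f b g, hpd1 f b g]
  obtain rfl : Ci = traceVector gm C := funext hCi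
  have hF_exp : IsExpNegMul F :=
    ⟨fun b => c * b ^ ((-3 : ℝ) / 2), funext₂ fun b g => by rw [hF]; ring⟩
  refine yukawaTerm_eq_zero_of_slice_eq gm C (fun i j k => ?_) (fun i j k => ?_) (fun i j => ?_)
  · rw [hC, hC, (hF_exp.partialDeriv k).partialDeriv_comm i j]
  · rw [hC, hC, hF_exp.partialDeriv_comm j k]
  · rw [hC, hgm, hF_exp.partialDeriv_one, partialDeriv_neg, partialDeriv_neg, Pi.neg_apply,
      Pi.neg_apply, neg_neg]

/-- For the classical ideal gas statistical manifold with metric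
`g_ij = ∂_i∂_j F` and AC tensor `C_ijk = −∂_i∂_j∂_k F`, where
`F(β,γ) = c β^{-3/2} e^{-γ}` and the indices run over the coordinates `(β,γ)`, the
Yukawa term `C_{ijk}C^{ijk} − C_i C^i` vanishes identically (indices raised with `g⁻¹`,
`C_i = C^j_{ij}`, `C^i = g^{ij} C_j`; `g` is nondegenerate). -/
theorem stmt_14 (c : ℝ) (hc : 0 < c) (β γ : ℝ) (hβ : 0 < β)
    (F : ℝ → ℝ → ℝ)
    (hF : ∀ b g, F b g = c * b ^ ((-3 : ℝ) / 2) * Real.exp (-g))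
    (pd : Fin 2 → (ℝ → ℝ → ℝ) → (ℝ → ℝ → ℝ))
    (hpd0 : ∀ f b g, pd 0 f b g = deriv (fun b' => f b' g) b)
    (hpd1 : ∀ f b g, pd 1 f b g = deriv (fun g' => f b g') g)
    (gm : Matrix (Fin 2) (Fin 2) ℝ) (hgm : ∀ i j, gm i j = pd i (pd j F) β γ)
    (hdet : gm.det ≠ 0)
    (C : Fin 2 → Fin 2 → Fin 2 → ℝ)
    (hC : ∀ i j k, C i j k = -(pd i (pd j (pd k F)) β γ))
    (Ci : Fin 2 → ℝ) (hCi : ∀ i, Ci i = ∑ j, ∑ l, gm⁻¹ j l * C l i j) :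
    (∑ i, ∑ j, ∑ k, ∑ i', ∑ j', ∑ k',
        C i j k * gm⁻¹ i i' * gm⁻¹ j j' * gm⁻¹ k k' * C i' j' k')
      - (∑ i, ∑ j, gm⁻¹ i j * Ci i * Ci j) = 0 :=
  stmt_14_general c β γ F hF pd hpd0 hpd1 gm hgm C hC Ci hCi
end

section
/- For the bosonic ideal gas metric g_{ββ} = (15/4)λ^{-3}β^{-2}Li_{5/2}(η), g_{βγ} = (3/2)λ^{-3}β^{-1}Li_{3/2}(η), g_{γγ} = λ^{-3}Li_{1/2}(η), the determinant is det g = (3/4)λ^{-6}β^{-2}[5 Li_{5/2}(η)Li_{1/2}(η) − 3 Li_{3/2}(η)²], and the bracketed quantity A(η) = 5Li_{5/2}(η)Li_{1/2}(η) − 3Li_{3/2}(η)² is strictly positive for 0 < η < 1. -/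
/-! The positivity of `5 Li_{5/2} Li_{1/2} - 3 Li_{3/2}²` comes from the log-convexity of
`s ↦ Li_s(η)`: Cauchy–Schwarz applied to the series gives `Li_{3/2}² ≤ Li_{5/2} Li_{1/2}`,
and `3 < 5`. -/

/-- The polylogarithm `Li_s(η) = Σ_{k≥1} η^k / k^s`. -/
noncomputable def Li (s : ℝ) (η : ℝ) : ℝ := ∑' k : ℕ, η ^ (k + 1) / ((k : ℝ) + 1) ^ s

theorem tsum_sq_le_tsum_mul_tsum {ι : Type*} {r f g : ι → ℝ} (hr : Summable r)
    (hf : Summable f) (hg : Summable g) (hf0 : ∀ i, 0 ≤ f i) (hg0 : ∀ i, 0 ≤ g i)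
    (hrfg : ∀ i, r i ^ 2 ≤ f i * g i) :
    (∑' i, r i) ^ 2 ≤ (∑' i, f i) * ∑' i, g i :=
  le_of_tendsto_of_tendsto' (hr.hasSum.pow 2) (Filter.Tendsto.mul hf.hasSum hg.hasSum) fun s =>
    Finset.sum_sq_le_sum_mul_sum_of_sq_le_mul s (fun i _ => hf0 i) (fun i _ => hg0 i)
      (fun i _ => hrfg i)

section Polylog

variable {η : ℝ}

theorem Li_term_nonneg (s : ℝ) (hη : 0 ≤ η) (k : ℕ) :
    0 ≤ η ^ (k + 1) / ((k : ℝ) + 1) ^ s := by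
  have : 0 < ((k : ℝ) + 1) ^ s := by positivity
  positivity

theorem summable_Li_term {s : ℝ} (hs : 0 ≤ s) (hη0 : 0 ≤ η) (hη1 : η < 1) :
    Summable fun k : ℕ => η ^ (k + 1) / ((k : ℝ) + 1) ^ s := by
  refine Summable.of_nonneg_of_le (Li_term_nonneg s hη0) (fun k => ?_)
    ((summable_geometric_of_lt_one hη0 hη1).comp_injective (add_left_injective 1))
  exact div_le_self (by positivity) (Real.one_le_rpow (by linarith [k.cast_nonneg (α := ℝ)]) hs)

theorem Li_pos {s : ℝ} (hs : 0 ≤ s) (hη0 : 0 < η) (hη1 : η < 1) : 0 < Li s η := by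
  refine (summable_Li_term hs hη0.le hη1).tsum_pos (Li_term_nonneg s hη0.le) 0 ?_
  have : 0 < ((0 : ℕ) + 1 : ℝ) ^ s := by positivity
  positivity

theorem Li_sq_le_mul {a b : ℝ} (ha : 0 ≤ a) (hb : 0 ≤ b) (hη0 : 0 ≤ η) (hη1 : η < 1) :
    Li ((a + b) / 2) η ^ 2 ≤ Li a η * Li b η := by
  refine tsum_sq_le_tsum_mul_tsum (summable_Li_term (by positivity) hη0 hη1)
    (summable_Li_term ha hη0 hη1) (summable_Li_term hb hη0 hη1)
    (Li_term_nonneg a hη0) (Li_term_nonneg b hη0) fun k => le_of_eq ?_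
  have hk : (0 : ℝ) < (k : ℝ) + 1 := by positivity
  rw [div_pow, sq (((k : ℝ) + 1) ^ ((a + b) / 2)), ← Real.rpow_add hk, add_halves,
    Real.rpow_add hk, div_mul_div_comm, sq]

end Polylog

theorem stmt_16_general (lam β η : ℝ)
    (hη0 : 0 < η) (hη1 : η < 1)
    (g : Matrix (Fin 2) (Fin 2) ℝ)
    (hg : g = !![15 / 4 * lam⁻¹ ^ 3 * β⁻¹ ^ 2 * Li (5 / 2) η,
                 3 / 2 * lam⁻¹ ^ 3 * β⁻¹ * Li (3 / 2) η;
                 3 / 2 * lam⁻¹ ^ 3 * β⁻¹ * Li (3 / 2) η,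
                 lam⁻¹ ^ 3 * Li (1 / 2) η]) :
    g.det = 3 / 4 * lam⁻¹ ^ 6 * β⁻¹ ^ 2 *
        (5 * Li (5 / 2) η * Li (1 / 2) η - 3 * Li (3 / 2) η ^ 2) ∧
      0 < 5 * Li (5 / 2) η * Li (1 / 2) η - 3 * Li (3 / 2) η ^ 2 := by
  refine ⟨by rw [hg, Matrix.det_fin_two_of]; ring, ?_⟩
  have hCS : Li (3 / 2) η ^ 2 ≤ Li (5 / 2) η * Li (1 / 2) η := by
    convert Li_sq_le_mul (a := 5 / 2) (b := 1 / 2) (by norm_num) (by norm_num) hη0.le hη1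
      using 3
    norm_num
  have hprod : 0 < Li (5 / 2) η * Li (1 / 2) η :=
    mul_pos (Li_pos (by norm_num) hη0 hη1) (Li_pos (by norm_num) hη0 hη1)
  linarith

/-- For the bosonic ideal gas metric
`g_ββ = (15/4)λ^{-3}β^{-2}Li_{5/2}(η)`, `g_βγ = (3/2)λ^{-3}β^{-1}Li_{3/2}(η)`,
`g_γγ = λ^{-3}Li_{1/2}(η)` (with `a = λ^{-3}`), the determinant is
`det g = (3/4)λ^{-6}β^{-2}[5 Li_{5/2}(η)Li_{1/2}(η) − 3 Li_{3/2}(η)²]`, and the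
bracketed quantity `A(η) = 5Li_{5/2}(η)Li_{1/2}(η) − 3Li_{3/2}(η)²` is strictly
positive for `0 < η < 1`. -/
theorem stmt_16 (lam β η : ℝ) (hlam : 0 < lam) (hβ : 0 < β)
    (hη0 : 0 < η) (hη1 : η < 1)
    (g : Matrix (Fin 2) (Fin 2) ℝ)
    (hg : g = !![15 / 4 * lam⁻¹ ^ 3 * β⁻¹ ^ 2 * Li (5 / 2) η,
                 3 / 2 * lam⁻¹ ^ 3 * β⁻¹ * Li (3 / 2) η;
                 3 / 2 * lam⁻¹ ^ 3 * β⁻¹ * Li (3 / 2) η,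
                 lam⁻¹ ^ 3 * Li (1 / 2) η]) :
    g.det = 3 / 4 * lam⁻¹ ^ 6 * β⁻¹ ^ 2 *
        (5 * Li (5 / 2) η * Li (1 / 2) η - 3 * Li (3 / 2) η ^ 2) ∧
      0 < 5 * Li (5 / 2) η * Li (1 / 2) η - 3 * Li (3 / 2) η ^ 2 :=
  stmt_16_general lam β η hη0 hη1 g hg
end

section
/- The power series of A(η) = 5 Li_{5/2}(η) Li_{1/2}(η) − 3 Li_{3/2}(η)² has all coefficients nonnegative, with lowest-order term 2η². -/
/-! With `x = j^{-1/2}` and `y = k^{-1/2}` the `(j, k)` term of the convolution is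
`5 x⁵ y − 3 x³ y³`. Pairing it with the `(k, j)` term gives
`x y (5 x⁴ + 5 y⁴ − 6 x² y²) = x y (5 (x² − y²)² + 4 x² y²) ≥ 0`, so the convolution
sum, which is invariant under `j ↔ k`, is nonnegative. -/

open Finset

theorem Finset.sum_Ioo_zero_reflect {M : Type*} [AddCommMonoid M] (f : ℕ → M) (n : ℕ) :
    ∑ j ∈ Ioo 0 n, f (n - j) = ∑ j ∈ Ioo 0 n, f j := by
  refine sum_nbij' (n - ·) (n - ·) ?_ ?_ ?_ ?_ fun _ _ => rfl <;> intro j hj <;>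
    simp only [mem_Ioo] at hj ⊢ <;> omega

theorem Finset.sum_Ioo_zero_nonneg_of_add_reflect_nonneg {M : Type*} [AddCommMonoid M]
    [LinearOrder M] [AddLeftMono M] {f : ℕ → M} {n : ℕ}
    (h : ∀ j ∈ Ioo 0 n, 0 ≤ f j + f (n - j)) : 0 ≤ ∑ j ∈ Ioo 0 n, f j := by
  have hsum : 2 • ∑ j ∈ Ioo 0 n, f j = ∑ j ∈ Ioo 0 n, (f j + f (n - j)) := by
    rw [sum_add_distrib, sum_Ioo_zero_reflect, two_nsmul]
  exact (nsmul_nonneg_iff two_ne_zero).1 (hsum ▸ sum_nonneg h)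

theorem five_mul_pow_five_sub_three_mul_pow_three_add_swap_nonneg {R : Type*} [CommRing R]
    [LinearOrder R] [IsStrictOrderedRing R] {x y : R} (hx : 0 ≤ x) (hy : 0 ≤ y) :
    0 ≤ (5 * x ^ 5 * y - 3 * x ^ 3 * y ^ 3) + (5 * y ^ 5 * x - 3 * y ^ 3 * x ^ 3) := by
  have hfactor : (5 * x ^ 5 * y - 3 * x ^ 3 * y ^ 3) + (5 * y ^ 5 * x - 3 * y ^ 3 * x ^ 3)
      = x * y * (5 * (x ^ 2 - y ^ 2) ^ 2 + 4 * x ^ 2 * y ^ 2) := by ring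
  rw [hfactor]
  positivity

/-- The power series of `A(η) = 5 Li_{5/2}(η) Li_{1/2}(η) − 3 Li_{3/2}(η)²`
has all coefficients nonnegative, with lowest-order term `2η²`. By the Cauchy product, the
coefficient of `η^n` is `Σ_{j+k=n, j,k≥1} (5 j^{-5/2} k^{-1/2} − 3 j^{-3/2} k^{-3/2})`:
this is `≥ 0` for all `n ≥ 2` and equals `2` for `n = 2` (for `n < 2` it is the empty
sum, i.e. `0`). -/
theorem stmt_17 (coeff : ℕ → ℝ)
    (hcoeff : ∀ n, coeff n = ∑ j ∈ Finset.Ioo 0 n,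
      (5 * (j : ℝ) ^ ((-5 : ℝ) / 2) * ((n - j : ℕ) : ℝ) ^ ((-1 : ℝ) / 2)
        - 3 * (j : ℝ) ^ ((-3 : ℝ) / 2) * ((n - j : ℕ) : ℝ) ^ ((-3 : ℝ) / 2))) :
    (∀ n, 2 ≤ n → 0 ≤ coeff n) ∧ coeff 2 = 2 := by
  have half_pow (k : ℕ) (m : ℕ) :
      (m : ℝ) ^ ((-k : ℝ) / 2) = ((m : ℝ) ^ ((-1 : ℝ) / 2)) ^ k := by
    rw [← Real.rpow_mul_natCast (Nat.cast_nonneg m)]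
    ring_nf
  have pow_five := half_pow 5
  have pow_three := half_pow 3
  push_cast at pow_five pow_three
  refine ⟨fun n _ => ?_, ?_⟩
  · rw [hcoeff]
    refine sum_Ioo_zero_nonneg_of_add_reflect_nonneg fun j hj => ?_
    rw [Nat.sub_sub_self (mem_Ioo.1 hj).2.le]
    simp only [pow_five, pow_three]
    exact five_mul_pow_five_sub_three_mul_pow_three_add_swap_nonneg
      (by positivity) (by positivity)
  · rw [hcoeff, show Ioo 0 2 = {1} by decide, sum_singleton]
    norm_num
end

section
/- As η → 1⁻, Li_{1/2}(η) ~ Γ(1/2)/(−ln η)^{1/2} and Li_{−1/2}(η) ~ Γ(3/2)/(−ln η)^{3/2}; consequently, with γ = −ln η, the Yukawa term C(η) = 20λ³ B(η)/A(η)³ of the bosonic ideal gas satisfies C ~ (2 ζ(3/2) λ³)/(5 √π ζ(5/2)) · γ^{−1/2} as γ → 0⁺, and in particular C diverges to +∞. -/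
open Filter Topology Asymptotics Real

/-- `A(η) = 5 Li_{5/2}(η) Li_{1/2}(η) − 3 Li_{3/2}(η)²`. -/
noncomputable def A (η : ℝ) : ℝ :=
  5 * Li (5 / 2) η * Li (1 / 2) η - 3 * Li (3 / 2) η ^ 2

/-- The numerator bracket `B` of the Yukawa term of the bosonic ideal gas. -/
noncomputable def B (η : ℝ) : ℝ :=
  5 * Li (5 / 2) η ^ 2 * Li (3 / 2) η * Li (1 / 2) η * Li (-1 / 2) η
    - 10 * Li (5 / 2) η ^ 2 * Li (1 / 2) η ^ 3
    - 3 * Li (5 / 2) η * Li (3 / 2) η ^ 3 * Li (-1 / 2) η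
    + 11 * Li (5 / 2) η * Li (3 / 2) η ^ 2 * Li (1 / 2) η ^ 2
    - 3 * Li (3 / 2) η ^ 4 * Li (1 / 2) η

/-! With `η = e^{-γ}`, `Li_{1-a}(η) = Σ_{n ≥ 1} n^{a-1} e^{-γn}` is a Riemann sum for
`∫₀^∞ t^{a-1} e^{-γt} dt = Γ(a) γ^{-a}`. Comparing the two on unit intervals (the integrand is
decreasing when `a ≤ 1`, and changes by at most a factor `e^{±γ}` over a unit step when `a ≥ 1`)
gives `γ^a Li_{1-a}(e^{-γ}) → Γ(a)` as `γ → 0⁺`, while `Li_{5/2}` and `Li_{3/2}` tend to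
`ζ(5/2)` and `ζ(3/2)`. With `x = γ^{1/2}`, every term of `A x` and of `B x⁴` other than the first
carries a positive power of `x`, so they tend to `5 ζ(5/2) Γ(1/2)` and
`5 ζ(5/2)² ζ(3/2) Γ(1/2) Γ(3/2)`; hence `C x` tends to a positive constant. -/

open MeasureTheory Set

theorem Ioc_add_natCast_subset_Ioi (c : ℝ) (n : ℕ) : Ioc (c + n) (c + n + 1) ⊆ Ioi c :=
  Ioc_subset_Ioi_self.trans (Ioi_subset_Ioi (le_add_of_nonneg_right n.cast_nonneg))

theorem iUnion_Ioc_add_natCast (c : ℝ) : ⋃ n : ℕ, Ioc (c + n) (c + n + 1) = Ioi c := by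
  ext t
  simp only [mem_iUnion, mem_Ioc, mem_Ioi]
  constructor
  · rintro ⟨n, hn⟩
    exact Ioc_add_natCast_subset_Ioi c n hn
  · intro ht
    obtain ⟨n, hn⟩ := mem_iUnion.mp ((iUnion_Ioc_add_intCast c).symm ▸ mem_univ t)
    have hn0 : (-1 : ℝ) < n := by linarith [hn.2]
    lift n to ℕ using by exact_mod_cast hn0
    exact ⟨n, by exact_mod_cast hn⟩

theorem hasSum_integral_Ioc_add_natCast {F : ℝ → ℝ} {c : ℝ} (hF : IntegrableOn F (Ioi c)) :
    HasSum (fun n : ℕ => ∫ t in Ioc (c + n) (c + n + 1), F t) (∫ t in Ioi c, F t) := by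
  have hd : Pairwise (Function.onFun Disjoint fun n : ℕ => Ioc (c + n) (c + n + 1)) := by
    intro i j hij
    simpa using pairwise_disjoint_Ioc_add_intCast c (Nat.cast_injective.ne hij : (i : ℤ) ≠ j)
  rw [← iUnion_Ioc_add_natCast] at hF ⊢
  exact hasSum_integral_iUnion (fun _ => measurableSet_Ioc) hd hF

theorem summable_and_tsum_le_integral_Ioi {F : ℝ → ℝ} {u : ℕ → ℝ} {c : ℝ}
    (hF : IntegrableOn F (Ioi c)) (hu : ∀ n, 0 ≤ u n)
    (h : ∀ n : ℕ, ∀ t ∈ Ioc (c + n) (c + n + 1), u n ≤ F t) :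
    Summable u ∧ ∑' n, u n ≤ ∫ t in Ioi c, F t := by
  have hle : ∀ n : ℕ, u n ≤ ∫ t in Ioc (c + n) (c + n + 1), F t := fun n => by
    simpa using setIntegral_ge_of_const_le_real measurableSet_Ioc (by simp) (h n)
      (hF.mono_set (Ioc_add_natCast_subset_Ioi c n))
  have hI := hasSum_integral_Ioc_add_natCast hF
  have hs : Summable u := hI.summable.of_nonneg_of_le hu hle
  exact ⟨hs, hasSum_le hle hs.hasSum hI⟩

theorem integral_Ioi_le_tsum {F : ℝ → ℝ} {u : ℕ → ℝ} {c : ℝ}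
    (hF : IntegrableOn F (Ioi c)) (hu : Summable u)
    (h : ∀ n : ℕ, ∀ t ∈ Ioc (c + n) (c + n + 1), F t ≤ u n) :
    ∫ t in Ioi c, F t ≤ ∑' n, u n := by
  have hle : ∀ n : ℕ, ∫ t in Ioc (c + n) (c + n + 1), F t ≤ u n := fun n => by
    have := setIntegral_mono_on
      (hF.mono_set (Ioc_add_natCast_subset_Ioi c n))
      (integrableOn_const (by simp)) measurableSet_Ioc (h n)
    simpa using this
  exact hasSum_le hle (hasSum_integral_Ioc_add_natCast hF) hu.hasSum

theorem integrableOn_rpow_mul_exp_neg_mul_Ioi {a γ : ℝ} (ha : 0 < a) (hγ : 0 < γ) :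
    IntegrableOn (fun t : ℝ => t ^ (a - 1) * exp (-(γ * t))) (Ioi 0) := by
  simpa [rpow_one] using
    integrableOn_rpow_mul_exp_neg_mul_rpow (p := 1) (by linarith) one_pos hγ

theorem integral_rpow_mul_exp_neg_mul_Ioi_mul_rpow {a γ : ℝ} (ha : 0 < a) (hγ : 0 < γ) :
    (∫ t in Ioi 0, t ^ (a - 1) * exp (-(γ * t))) * γ ^ a = Gamma a := by
  rw [integral_rpow_mul_exp_neg_mul_Ioi ha hγ, mul_right_comm, ← mul_rpow (by positivity) hγ.le,
    one_div_mul_cancel hγ.ne', one_rpow, one_mul]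

theorem antitoneOn_rpow_mul_exp_neg_mul {a γ : ℝ} (ha : a ≤ 1) (hγ : 0 ≤ γ) :
    AntitoneOn (fun t : ℝ => t ^ (a - 1) * exp (-(γ * t))) (Ioi 0) := fun x hx y _ hxy =>
  mul_le_mul (rpow_le_rpow_of_nonpos hx hxy (by linarith))
    (exp_le_exp.mpr (by nlinarith)) (exp_pos _).le (rpow_nonneg (le_of_lt hx) _)

theorem rpow_mul_exp_neg_mul_le_exp_mul {a γ x y : ℝ} (ha : 1 ≤ a) (hγ : 0 ≤ γ) (hx : 0 ≤ x)
    (hxy : x ≤ y) (hyx : y ≤ x + 1) :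
    x ^ (a - 1) * exp (-(γ * x)) ≤ exp γ * (y ^ (a - 1) * exp (-(γ * y))) := by
  have hexp : exp (-(γ * x)) ≤ exp γ * exp (-(γ * y)) := by
    rw [← exp_add]
    exact exp_le_exp.mpr (by nlinarith)
  calc x ^ (a - 1) * exp (-(γ * x)) ≤ y ^ (a - 1) * (exp γ * exp (-(γ * y))) :=
        mul_le_mul (rpow_le_rpow hx hxy (by linarith)) hexp (exp_pos _).le
          (rpow_nonneg (hx.trans hxy) _)
    _ = exp γ * (y ^ (a - 1) * exp (-(γ * y))) := by ring

theorem Li_one_sub_exp_neg (a γ : ℝ) :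
    Li (1 - a) (exp (-γ)) = ∑' n : ℕ, ((n : ℝ) + 1) ^ (a - 1) * exp (-(γ * ((n : ℝ) + 1))) := by
  refine tsum_congr fun n => ?_
  rw [← exp_nat_mul, show a - 1 = -(1 - a) by ring, rpow_neg (by positivity), div_eq_inv_mul]
  push_cast
  ring_nf

theorem integral_Ioc_zero_one_rpow_mul_exp_neg_mul_le {a γ : ℝ} (ha : 0 < a) (hγ : 0 < γ) :
    ∫ t in Ioc 0 1, t ^ (a - 1) * exp (-(γ * t)) ≤ 1 / a := by
  have hrpow : IntegrableOn (fun t : ℝ => t ^ (a - 1)) (Ioc 0 1) := by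
    simpa using (intervalIntegral.intervalIntegrable_rpow' (a := 0) (b := 1)
      (by linarith : -1 < a - 1)).1
  calc ∫ t in Ioc 0 1, t ^ (a - 1) * exp (-(γ * t))
      ≤ ∫ t in Ioc 0 1, t ^ (a - 1) := by
        refine setIntegral_mono_on
          ((integrableOn_rpow_mul_exp_neg_mul_Ioi ha hγ).mono_set Ioc_subset_Ioi_self) hrpow
          measurableSet_Ioc fun t ht => mul_le_of_le_one_right (rpow_nonneg ht.1.le _)
            (exp_le_one_iff.mpr (by nlinarith [ht.1]))
    _ = 1 / a := by
        rw [← intervalIntegral.integral_of_le zero_le_one, integral_rpow (Or.inl (by linarith)),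
          sub_add_cancel, one_rpow, zero_rpow ha.ne', sub_zero]

theorem Li_one_sub_exp_neg_mul_rpow_mem_Icc_of_le_one {a γ : ℝ} (ha : 0 < a) (ha1 : a ≤ 1)
    (hγ : 0 < γ) : Li (1 - a) (exp (-γ)) * γ ^ a ∈ Icc (Gamma a - γ ^ a / a) (Gamma a) := by
  set F : ℝ → ℝ := fun t => t ^ (a - 1) * exp (-(γ * t))
  have hF : IntegrableOn F (Ioi 0) := integrableOn_rpow_mul_exp_neg_mul_Ioi ha hγ
  have hanti : AntitoneOn F (Ioi 0) := antitoneOn_rpow_mul_exp_neg_mul ha1 hγ.le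
  have hpos : ∀ n : ℕ, (0 : ℝ) < n + 1 := fun n => by positivity
  obtain ⟨hsum, hle⟩ := summable_and_tsum_le_integral_Ioi (u := fun n : ℕ => F (n + 1)) hF
    (fun n => mul_nonneg (rpow_nonneg (hpos n).le _) (exp_pos _).le)
    fun n t ht => hanti (Ioc_add_natCast_subset_Ioi 0 n ht) (hpos n) (by linarith [ht.2])
  have hge := integral_Ioi_le_tsum (c := 1) (hF.mono_set (Ioi_subset_Ioi zero_le_one)) hsum
    fun n t ht => hanti (hpos n) (Ioi_subset_Ioi zero_le_one (Ioc_add_natCast_subset_Ioi 1 n ht))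
      (by linarith [ht.1])
  have hsplit : ∫ t in Ioi 0, F t = (∫ t in Ioc 0 1, F t) + ∫ t in Ioi 1, F t := by
    rw [← setIntegral_union (Ioc_disjoint_Ioi le_rfl) measurableSet_Ioi
      (hF.mono_set Ioc_subset_Ioi_self) (hF.mono_set (Ioi_subset_Ioi zero_le_one)),
      Ioc_union_Ioi_eq_Ioi zero_le_one]
  have hhead := integral_Ioc_zero_one_rpow_mul_exp_neg_mul_le ha hγ
  have hI := integral_rpow_mul_exp_neg_mul_Ioi_mul_rpow ha hγ
  rw [Li_one_sub_exp_neg]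
  constructor
  · calc Gamma a - γ ^ a / a = ((∫ t in Ioc 0 1, F t) + ∫ t in Ioi 1, F t) * γ ^ a - γ ^ a / a := by
          rw [← hsplit, hI]
      _ ≤ (1 / a + ∑' n : ℕ, F (n + 1)) * γ ^ a - γ ^ a / a := by gcongr
      _ = (∑' n : ℕ, F (n + 1)) * γ ^ a := by ring
  · calc (∑' n : ℕ, F (n + 1)) * γ ^ a ≤ (∫ t in Ioi 0, F t) * γ ^ a := by gcongr
      _ = Gamma a := hI

theorem Li_one_sub_exp_neg_mul_rpow_mem_Icc_of_one_le {a γ : ℝ} (ha : 1 ≤ a) (hγ : 0 < γ) :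
    Li (1 - a) (exp (-γ)) * γ ^ a ∈ Icc (exp (-γ) * Gamma a) (exp γ * Gamma a) := by
  set F : ℝ → ℝ := fun t => t ^ (a - 1) * exp (-(γ * t))
  have hF : IntegrableOn F (Ioi 0) := integrableOn_rpow_mul_exp_neg_mul_Ioi (by linarith) hγ
  have hpos : ∀ n : ℕ, (0 : ℝ) < n + 1 := fun n => by positivity
  obtain ⟨hsum, hle⟩ := summable_and_tsum_le_integral_Ioi (c := 1)
    (u := fun n : ℕ => exp (-γ) * F (n + 1)) (hF.mono_set (Ioi_subset_Ioi zero_le_one))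
    (fun n => by positivity) fun n t ht => by
      rw [exp_neg, inv_mul_le_iff₀ (exp_pos γ)]
      exact rpow_mul_exp_neg_mul_le_exp_mul ha hγ.le (hpos n).le (by linarith [ht.1])
        (by linarith [ht.2])
  have hsum' : Summable fun n : ℕ => F (n + 1) := (summable_mul_left_iff (exp_pos _).ne').mp hsum
  have hge := integral_Ioi_le_tsum (c := 0) (u := fun n : ℕ => exp γ * F (n + 1)) hF
    (hsum'.mul_left _) fun n t ht => rpow_mul_exp_neg_mul_le_exp_mul ha hγ.le
      (by linarith [ht.1, n.cast_nonneg (α := ℝ)]) (by linarith [ht.2]) (by linarith [ht.1])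
  have htail : ∫ t in Ioi 1, F t ≤ ∫ t in Ioi 0, F t :=
    setIntegral_mono_set hF (ae_restrict_of_forall_mem measurableSet_Ioi fun t ht =>
      mul_nonneg (rpow_nonneg (le_of_lt ht) _) (exp_pos _).le)
      (Ioi_subset_Ioi zero_le_one).eventuallyLE
  rw [tsum_mul_left] at hle hge
  have hI := integral_rpow_mul_exp_neg_mul_Ioi_mul_rpow (by linarith : 0 < a) hγ
  rw [Li_one_sub_exp_neg]
  constructor
  · calc exp (-γ) * Gamma a = exp (-γ) * (∫ t in Ioi 0, F t) * γ ^ a := by rw [← hI]; ring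
      _ ≤ (∑' n : ℕ, F (n + 1)) * γ ^ a := by
          gcongr
          rwa [exp_neg, inv_mul_le_iff₀ (exp_pos γ)]
  · calc (∑' n : ℕ, F (n + 1)) * γ ^ a ≤ exp γ * (∫ t in Ioi 0, F t) * γ ^ a := by
          gcongr
          rw [← inv_mul_le_iff₀ (exp_pos γ), ← exp_neg]
          exact hle.trans htail
      _ = exp γ * Gamma a := by rw [← hI]; ring

theorem tendsto_Li_one_sub_exp_neg_mul_rpow {a : ℝ} (ha : 0 < a) :
    Tendsto (fun γ => Li (1 - a) (exp (-γ)) * γ ^ a) (𝓝[>] 0) (𝓝 (Gamma a)) := by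
  rcases le_total a 1 with ha1 | ha1
  · have hlow : Tendsto (fun γ : ℝ => Gamma a - γ ^ a / a) (𝓝[>] 0) (𝓝 (Gamma a)) :=
      ((continuous_const.sub ((continuous_rpow_const ha.le).div_const a)).tendsto' 0 _
        (by simp [zero_rpow ha.ne'])).mono_left nhdsWithin_le_nhds
    refine tendsto_of_tendsto_of_tendsto_of_le_of_le' hlow tendsto_const_nhds ?_ ?_ <;>
      filter_upwards [self_mem_nhdsWithin] with γ hγ
    exacts [(Li_one_sub_exp_neg_mul_rpow_mem_Icc_of_le_one ha ha1 hγ).1,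
      (Li_one_sub_exp_neg_mul_rpow_mem_Icc_of_le_one ha ha1 hγ).2]
  · have hexp : ∀ c : ℝ, Tendsto (fun γ => exp (c * γ) * Gamma a) (𝓝[>] 0) (𝓝 (Gamma a)) :=
      fun c => (((continuous_const.mul continuous_id).rexp.mul continuous_const).tendsto' 0 _
        (by simp)).mono_left nhdsWithin_le_nhds
    refine tendsto_of_tendsto_of_tendsto_of_le_of_le' (hexp (-1)) (hexp 1) ?_ ?_ <;>
      filter_upwards [self_mem_nhdsWithin] with γ hγ
    · simpa using (Li_one_sub_exp_neg_mul_rpow_mem_Icc_of_one_le ha1 hγ).1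
    · simpa using (Li_one_sub_exp_neg_mul_rpow_mem_Icc_of_one_le ha1 hγ).2

theorem tendsto_neg_log_nhdsLT_one : Tendsto (fun η => -log η) (𝓝[<] 1) (𝓝[>] 0) := by
  refine tendsto_nhdsWithin_iff.mpr ⟨?_, ?_⟩
  · simpa using ((continuousAt_log one_ne_zero).tendsto.mono_left nhdsWithin_le_nhds).neg
  · filter_upwards [Ioo_mem_nhdsLT zero_lt_one] with η hη
    simpa using log_neg hη.1 hη.2

theorem tendsto_Li_mul_neg_log_rpow {s : ℝ} (hs : s < 1) :
    Tendsto (fun η => Li s η * (-log η) ^ (1 - s)) (𝓝[<] 1) (𝓝 (Gamma (1 - s))) := by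
  refine ((tendsto_Li_one_sub_exp_neg_mul_rpow (sub_pos.mpr hs)).comp
    tendsto_neg_log_nhdsLT_one).congr' ?_
  filter_upwards [Ioo_mem_nhdsLT zero_lt_one] with η hη
  simp [exp_log hη.1]

theorem tendsto_Li_nhdsLT_one {s : ℝ} (hs : 1 < s) : Tendsto (Li s) (𝓝[<] 1) (𝓝 (Li s 1)) := by
  have hζ : Summable fun n : ℕ => (((n : ℝ) + 1) ^ s)⁻¹ := by
    exact_mod_cast (summable_nat_add_iff 1).mpr (Real.summable_nat_rpow_inv.mpr hs)
  refine tendsto_tsum_of_dominated_convergence hζ (fun n => ?_) ?_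
  · exact ((continuous_pow (n + 1)).tendsto 1).mono_left nhdsWithin_le_nhds |>.div_const _
  · filter_upwards [Ioo_mem_nhdsLT zero_lt_one] with η hη n
    rw [norm_div, norm_pow, Real.norm_of_nonneg hη.1.le,
      Real.norm_of_nonneg (by positivity), div_eq_mul_inv]
    exact mul_le_of_le_one_left (by positivity) (pow_le_one₀ hη.1.le hη.2.le)

theorem Li_one_pos {s : ℝ} (hs : 1 < s) : 0 < Li s 1 := by
  have hζ : Summable fun n : ℕ => (1 : ℝ) ^ (n + 1) / ((n : ℝ) + 1) ^ s := by
    simpa [one_div] using (summable_nat_add_iff 1).mpr (Real.summable_nat_rpow_inv.mpr hs)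
  exact hζ.tsum_pos (fun n => by positivity) 0 (by norm_num)

theorem isEquivalent_div_of_tendsto_mul {α : Type*} {l : Filter α} {f g : α → ℝ} {c : ℝ}
    (hc : c ≠ 0) (hg : ∀ᶠ x in l, g x ≠ 0) (h : Tendsto (fun x => f x * g x) l (𝓝 c)) :
    f ~[l] fun x => c / g x := by
  refine (isEquivalent_iff_tendsto_one (hg.mono fun x hx => div_ne_zero hc hx)).mpr ?_
  have h1 := h.div_const c
  rw [div_self hc] at h1
  refine h1.congr' (hg.mono fun x hx => ?_)
  simp only [Pi.div_apply]
  field_simp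

theorem tendsto_atTop_of_tendsto_mul {α : Type*} {l : Filter α} {f g : α → ℝ} {c : ℝ}
    (hc : 0 < c) (hg : Tendsto g l (𝓝[>] 0)) (h : Tendsto (fun x => f x * g x) l (𝓝 c)) :
    Tendsto f l atTop := by
  refine (h.pos_mul_atTop hc hg.inv_tendsto_nhdsGT_zero).congr' ?_
  filter_upwards [(tendsto_nhdsWithin_iff.mp hg).2] with x hx
  simp only [Pi.inv_apply]
  field_simp [(mem_Ioi.mp hx).ne']

theorem isEquivalent_Li_nhdsLT_one {s : ℝ} (hs : s < 1) :
    Li s ~[𝓝[<] 1] fun η => Gamma (1 - s) / (-log η) ^ (1 - s) := by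
  refine isEquivalent_div_of_tendsto_mul (Gamma_pos_of_pos (sub_pos.mpr hs)).ne' ?_
    (tendsto_Li_mul_neg_log_rpow hs)
  filter_upwards [(tendsto_nhdsWithin_iff.mp tendsto_neg_log_nhdsLT_one).2] with η hη
  exact (rpow_pos_of_pos hη _).ne'

theorem tendsto_sqrt_neg_log_nhdsLT_one :
    Tendsto (fun η => (-log η) ^ ((1 : ℝ) / 2)) (𝓝[<] 1) (𝓝[>] 0) := by
  have h := tendsto_nhdsWithin_iff.mp tendsto_neg_log_nhdsLT_one
  refine tendsto_nhdsWithin_iff.mpr ⟨?_, h.2.mono fun η hη => rpow_pos_of_pos hη _⟩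
  exact ((continuous_rpow_const (by norm_num)).tendsto' 0 0 (by norm_num)).comp h.1

theorem tendsto_Li_one_half_mul_sqrt_neg_log :
    Tendsto (fun η => Li (1 / 2) η * (-log η) ^ ((1 : ℝ) / 2)) (𝓝[<] 1) (𝓝 √π) := by
  have h := tendsto_Li_mul_neg_log_rpow (s := 1 / 2) (by norm_num)
  rwa [show (1 : ℝ) - 1 / 2 = 1 / 2 by norm_num, Gamma_one_half_eq] at h

theorem tendsto_Li_neg_one_half_mul_sqrt_neg_log_pow_three :
    Tendsto (fun η => Li (-1 / 2) η * ((-log η) ^ ((1 : ℝ) / 2)) ^ 3) (𝓝[<] 1)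
      (𝓝 (√π / 2)) := by
  have h := tendsto_Li_mul_neg_log_rpow (s := -1 / 2) (by norm_num)
  rw [show (1 : ℝ) - -1 / 2 = 1 / 2 + 1 by norm_num, Gamma_add_one (by norm_num),
    Gamma_one_half_eq, mul_comm, ← div_eq_mul_one_div] at h
  refine h.congr' ?_
  filter_upwards [(tendsto_nhdsWithin_iff.mp tendsto_neg_log_nhdsLT_one).2] with η hη
  rw [← rpow_natCast, ← rpow_mul (le_of_lt hη)]
  norm_num

theorem tendsto_A_mul_sqrt_neg_log :
    Tendsto (fun η => A η * (-log η) ^ ((1 : ℝ) / 2)) (𝓝[<] 1)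
      (𝓝 (5 * Li (5 / 2) 1 * √π)) := by
  have hx := tendsto_sqrt_neg_log_nhdsLT_one.mono_right nhdsWithin_le_nhds
  have h := (((tendsto_Li_nhdsLT_one (s := 5 / 2) (by norm_num)).const_mul 5).mul
    tendsto_Li_one_half_mul_sqrt_neg_log).sub
    ((((tendsto_Li_nhdsLT_one (s := 3 / 2) (by norm_num)).pow 2).const_mul 3).mul hx)
  rw [mul_zero, sub_zero] at h
  exact h.congr fun η => by simp only [A]; ring

theorem tendsto_B_mul_sqrt_neg_log_pow_four :
    Tendsto (fun η => B η * ((-log η) ^ ((1 : ℝ) / 2)) ^ 4) (𝓝[<] 1)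
      (𝓝 (5 * Li (5 / 2) 1 ^ 2 * Li (3 / 2) 1 * √π * (√π / 2))) := by
  have hx := tendsto_sqrt_neg_log_nhdsLT_one.mono_right nhdsWithin_le_nhds
  have h5 := tendsto_Li_nhdsLT_one (s := 5 / 2) (by norm_num)
  have h3 := tendsto_Li_nhdsLT_one (s := 3 / 2) (by norm_num)
  have hp := tendsto_Li_one_half_mul_sqrt_neg_log
  have hq := tendsto_Li_neg_one_half_mul_sqrt_neg_log_pow_three
  have h := (((((h5.pow 2).const_mul 5).mul h3).mul hp).mul hq).sub
    ((((h5.pow 2).const_mul 10).mul (hp.pow 3)).mul hx) |>.sub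
    ((((h5.const_mul 3).mul (h3.pow 3)).mul hq).mul hx) |>.add
    ((((h5.const_mul 11).mul (h3.pow 2)).mul (hp.pow 2)).mul (hx.pow 2)) |>.sub
    ((((h3.pow 4).const_mul 3).mul hp).mul (hx.pow 3))
  simp only [mul_zero, sub_zero, add_zero, ne_eq, OfNat.ofNat_ne_zero, not_false_eq_true,
    zero_pow] at h
  exact h.congr fun η => by simp only [B]; ring

theorem tendsto_yukawa_mul_sqrt_neg_log (lam : ℝ) :
    Tendsto (fun η => 20 * lam ^ 3 * B η / A η ^ 3 * (-log η) ^ ((1 : ℝ) / 2)) (𝓝[<] 1)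
      (𝓝 (2 * Li (3 / 2) 1 * lam ^ 3 / (5 * √π * Li (5 / 2) 1))) := by
  have hζ5 := Li_one_pos (s := 5 / 2) (by norm_num)
  have hπ : 0 < √π := sqrt_pos.mpr pi_pos
  have h := (tendsto_B_mul_sqrt_neg_log_pow_four.const_mul (20 * lam ^ 3)).div
    (tendsto_A_mul_sqrt_neg_log.pow 3) (by positivity)
  rw [show 20 * lam ^ 3 * (5 * Li (5 / 2) 1 ^ 2 * Li (3 / 2) 1 * √π * (√π / 2)) /
      (5 * Li (5 / 2) 1 * √π) ^ 3 = 2 * Li (3 / 2) 1 * lam ^ 3 / (5 * √π * Li (5 / 2) 1) by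
    field_simp; ring] at h
  refine h.congr' ?_
  filter_upwards [(tendsto_nhdsWithin_iff.mp tendsto_sqrt_neg_log_nhdsLT_one).2] with η hη
  have hx : (-log η) ^ ((1 : ℝ) / 2) ≠ 0 := (mem_Ioi.mp hη).ne'
  -- also where `A η = 0`: both sides are then `0`, by the convention `x / 0 = 0`
  rw [Pi.div_apply, mul_pow, ← mul_assoc, mul_div_mul_comm]
  field_simp

/-- As `η → 1⁻`, `Li_{1/2}(η) ~ Γ(1/2)/(−ln η)^{1/2}` and
`Li_{−1/2}(η) ~ Γ(3/2)/(−ln η)^{3/2}`; consequently, with `γ = −ln η`, the Yukawa term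
`C(η) = 20λ³ B(η)/A(η)³` of the bosonic ideal gas satisfies
`C ~ (2 ζ(3/2) λ³)/(5 √π ζ(5/2)) · γ^{−1/2}` as `γ → 0⁺` (i.e. as `η → 1⁻`), and in
particular `C` diverges to `+∞`. (Here `ζ(s) = Li s 1` for `s > 1`.) -/
theorem stmt_19 (lam : ℝ) (hlam : 0 < lam) (C : ℝ → ℝ)
    (hC : ∀ η, C η = 20 * lam ^ 3 * B η / (A η) ^ 3) :
    (fun η => Li (1 / 2) η) ~[𝓝[<] (1 : ℝ)]
        (fun η => Real.Gamma (1 / 2) / (-Real.log η) ^ ((1 : ℝ) / 2)) ∧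
      (fun η => Li (-1 / 2) η) ~[𝓝[<] (1 : ℝ)]
        (fun η => Real.Gamma (3 / 2) / (-Real.log η) ^ ((3 : ℝ) / 2)) ∧
      C ~[𝓝[<] (1 : ℝ)]
        (fun η => 2 * Li (3 / 2) 1 * lam ^ 3 / (5 * Real.sqrt π * Li (5 / 2) 1) *
          (-Real.log η) ^ (-(1 : ℝ) / 2)) ∧
      Tendsto C (𝓝[<] (1 : ℝ)) atTop := by
  obtain rfl : C = fun η => 20 * lam ^ 3 * B η / A η ^ 3 := funext hC
  have hK : 0 < 2 * Li (3 / 2) 1 * lam ^ 3 / (5 * √π * Li (5 / 2) 1) := by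
    have := Li_one_pos (s := 3 / 2) (by norm_num)
    have := Li_one_pos (s := 5 / 2) (by norm_num)
    have := sqrt_pos.mpr pi_pos
    positivity
  have hsqrt := tendsto_nhdsWithin_iff.mp tendsto_sqrt_neg_log_nhdsLT_one
  refine ⟨?_, ?_, ?_, tendsto_atTop_of_tendsto_mul hK tendsto_sqrt_neg_log_nhdsLT_one
    (tendsto_yukawa_mul_sqrt_neg_log lam)⟩
  · simpa only [show (1 : ℝ) - 1 / 2 = 1 / 2 by norm_num] using
      isEquivalent_Li_nhdsLT_one (s := 1 / 2) (by norm_num)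
  · simpa only [show (1 : ℝ) - -1 / 2 = 3 / 2 by norm_num] using
      isEquivalent_Li_nhdsLT_one (s := -1 / 2) (by norm_num)
  · refine (isEquivalent_div_of_tendsto_mul hK.ne' (hsqrt.2.mono fun η hη => (mem_Ioi.mp hη).ne')
      (tendsto_yukawa_mul_sqrt_neg_log lam)).congr_right ?_
    filter_upwards [(tendsto_nhdsWithin_iff.mp tendsto_neg_log_nhdsLT_one).2] with η hη
    rw [neg_div, rpow_neg (le_of_lt hη), div_eq_mul_inv]
end
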